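/- Let ρ, Θ, 𝒯 : ℝ × ℝ³ → ℝ and u, v : ℝ × ℝ³ → ℝ³ be continuously differentiable, and let G : ℝ → ℝ be continuously differentiable. Assume there is a compact set K ⊂ ℝ³ such that ρ(t,·) is supported in K for every t, and that at every point: ∂_t ρ + div_x(ρu) = 0, ∂_t Θ + u·∇_x Θ = 0, and ∂_t 𝒯 + v·∇_x 𝒯 = 0. Then for all times τ₁ ≤ τ₂: ∫_{ℝ³} (1/2) ρ |G(Θ) − 𝒯|² dx evaluated at t = τ₂ minus the same integral at t = τ₁ equals ∫_{τ₁}^{τ₂} ∫_{ℝ³} ρ (G(Θ) − 𝒯)(v − u)·∇_x 𝒯 dx dt. -/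

import Mathlib

/-!
Write `e = ½ρ(G(Θ) − 𝒯)²`. Since `ρ` solves the continuity equation, `∂ₜe + div(e u)` is `ρ`
times the material derivative of `½(G(Θ) − 𝒯)²` along `u`, and by the two transport equations
that derivative is `(G(Θ) − 𝒯)(v − u)·∇𝒯`. The divergence integrates to zero because `e u` has
compact support, so this is `d/dt ∫ e`, and the fundamental theorem of calculus concludes.
-/

open MeasureTheory RealInnerProductSpace

/-- Three-dimensional Euclidean space. -/
abbrev E3 : Type := EuclideanSpace ℝ (Fin 3)

/-- Divergence of a vector field on `ℝ³`. -/
noncomputable def div3 (V : E3 → E3) (x : E3) : ℝ :=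
  ∑ i : Fin 3, ⟪fderiv ℝ V x (EuclideanSpace.single i 1), EuclideanSpace.single i 1⟫

open Function

theorem hasCompactSupport_of_support_subset {X F : Type*} [TopologicalSpace X] [R1Space X]
    [Zero F] {f : X → F} {K : Set X} (hK : IsCompact K) (hfK : support f ⊆ K) :
    HasCompactSupport f :=
  HasCompactSupport.intro hK fun _ hx => notMem_support.mp (hx ∘ (hfK ·))

theorem support_deriv_fst_subset {E F : Type*} [NormedAddCommGroup F] [NormedSpace ℝ F]
    {f : ℝ → E → F} {K : Set E} (hfK : ∀ t, support (f t) ⊆ K) (t : ℝ) :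
    support (fun x => deriv (fun s => f s x) t) ⊆ K := by
  intro x hx
  by_contra hxK
  have hzero : (fun s => f s x) = fun _ => 0 := funext fun s => notMem_support.mp (hxK ∘ (hfK s ·))
  simp [hzero] at hx

section Slices

variable {E F : Type*} [NormedAddCommGroup E] [NormedSpace ℝ E] [NormedAddCommGroup F]
  [NormedSpace ℝ F] {f : ℝ → E → F} {t : ℝ} {x : E}

theorem hasDerivAt_fst_of_differentiableAt_uncurry (hf : DifferentiableAt ℝ (uncurry f) (t, x)) :
    HasDerivAt (fun s => f s x) (fderiv ℝ (uncurry f) (t, x) (1, 0)) t := by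
  have hpair : HasDerivAt (fun s : ℝ => (s, x)) ((1 : ℝ), (0 : E)) t :=
    (hasDerivAt_id t).prodMk (hasDerivAt_const t x)
  exact hf.hasFDerivAt.comp_hasDerivAt t hpair

theorem differentiableAt_snd_of_differentiableAt_uncurry
    (hf : DifferentiableAt ℝ (uncurry f) (t, x)) : DifferentiableAt ℝ (f t) x :=
  hf.comp x ((differentiableAt_const t).prodMk differentiableAt_id)

theorem contDiff_snd_of_contDiff_uncurry {n : WithTop ℕ∞} (hf : ContDiff ℝ n (uncurry f))
    (t : ℝ) : ContDiff ℝ n (f t) :=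
  hf.comp (contDiff_const.prodMk contDiff_id)

theorem continuous_uncurry_deriv_fst (hf : ContDiff ℝ 1 (uncurry f)) :
    Continuous (uncurry fun t x => deriv (fun s => f s x) t) := by
  have hderiv : (uncurry fun t x => deriv (fun s => f s x) t)
      = fun p => fderiv ℝ (uncurry f) p (1, 0) := by
    ext ⟨t, x⟩
    exact (hasDerivAt_fst_of_differentiableAt_uncurry (hf.differentiable one_ne_zero _)).deriv
  rw [hderiv]
  exact (hf.continuous_fderiv one_ne_zero).clm_apply continuous_const

end Slices

theorem continuous_integral_of_support_subset {X E F : Type*} [TopologicalSpace X]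
    [FirstCountableTopology X] [LocallyCompactSpace X] [TopologicalSpace E] [MeasurableSpace E]
    [OpensMeasurableSpace E] [SecondCountableTopology E] {μ : Measure E}
    [IsLocallyFiniteMeasure μ] [NormedAddCommGroup F] [NormedSpace ℝ F] {f : X → E → F}
    {K : Set E} (hf : Continuous (uncurry f)) (hK : IsCompact K)
    (hfK : ∀ t, support (f t) ⊆ K) : Continuous fun t => ∫ x, f t x ∂μ := by
  have hset : ∀ t, ∫ x in K, f t x ∂μ = ∫ x, f t x ∂μ := fun t =>
    setIntegral_eq_integral_of_forall_compl_eq_zero fun x hx => notMem_support.mp (hx ∘ (hfK t ·))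
  simpa only [hset] using continuous_parametric_integral_of_continuous (μ := μ) hf hK

section ParametricIntegral

variable {E F : Type*} [NormedAddCommGroup E] [NormedSpace ℝ E] [MeasurableSpace E]
  [OpensMeasurableSpace E] {μ : Measure E} [IsLocallyFiniteMeasure μ] [NormedAddCommGroup F]
  [NormedSpace ℝ F] {f : ℝ → E → F} {K : Set E}

theorem integrable_deriv_fst_of_support_subset (hf : ContDiff ℝ 1 (uncurry f)) (hK : IsCompact K)
    (hfK : ∀ t, support (f t) ⊆ K) (t : ℝ) : Integrable (fun x => deriv (fun s => f s x) t) μ :=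
  ((continuous_uncurry_deriv_fst hf).comp (continuous_const.prodMk continuous_id))
    |>.integrable_of_hasCompactSupport
      (hasCompactSupport_of_support_subset hK (support_deriv_fst_subset hfK t))

theorem hasDerivAt_integral_of_support_subset [SecondCountableTopology E]
    (hf : ContDiff ℝ 1 (uncurry f)) (hK : IsCompact K) (hfK : ∀ t, support (f t) ⊆ K) (t : ℝ) :
    HasDerivAt (fun t => ∫ x, f t x ∂μ) (∫ x, deriv (fun s => f s x) t ∂μ) t := by
  have hft : ∀ s, Continuous (f s) := fun s => (contDiff_snd_of_contDiff_uncurry hf s).continuous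
  have hderiv := continuous_uncurry_deriv_fst hf
  obtain ⟨C, hC⟩ := ((isCompact_closedBall t 1).prod hK).exists_bound_of_continuousOn
    hderiv.continuousOn
  have hderivK := support_deriv_fst_subset hfK
  refine (hasDerivAt_integral_of_dominated_loc_of_deriv_le (μ := μ) (F := fun s x => f s x)
    (F' := fun s x => deriv (fun r => f r x) s) (bound := K.indicator fun _ => C)
    (Metric.closedBall_mem_nhds t one_pos) ?_ ?_ ?_ ?_ ?_ ?_).2
  · exact .of_forall fun s => (hft s).aestronglyMeasurable
  · exact (hft t).integrable_of_hasCompactSupport (hasCompactSupport_of_support_subset hK (hfK t))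
  · exact (integrable_deriv_fst_of_support_subset hf hK hfK t).aestronglyMeasurable
  · refine .of_forall fun x s hs => ?_
    by_cases hx : x ∈ K
    · simpa [hx] using hC (s, x) ⟨hs, hx⟩
    · simp [hx, notMem_support.mp (hx ∘ (hderivK s ·))]
  · exact (integrable_indicator_iff hK.measurableSet).mpr (integrableOn_const hK.measure_ne_top)
  · exact .of_forall fun x s _ =>
      (hasDerivAt_fst_of_differentiableAt_uncurry (hf.differentiable one_ne_zero _))
        |>.differentiableAt.hasDerivAt

theorem integral_sub_integral_eq_intervalIntegral_deriv [SecondCountableTopology E]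
    [CompleteSpace F] (hf : ContDiff ℝ 1 (uncurry f)) (hK : IsCompact K)
    (hfK : ∀ t, support (f t) ⊆ K) (a b : ℝ) :
    ∫ x, f b x ∂μ - ∫ x, f a x ∂μ = ∫ t in a..b, ∫ x, deriv (fun s => f s x) t ∂μ :=
  (intervalIntegral.integral_eq_sub_of_hasDerivAt
    (fun t _ => hasDerivAt_integral_of_support_subset hf hK hfK t)
    ((continuous_integral_of_support_subset (continuous_uncurry_deriv_fst hf) hK
      (support_deriv_fst_subset hfK)).intervalIntegrable a b)).symm

end ParametricIntegral

section IntegralFDeriv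

variable {E F : Type*} [NormedAddCommGroup E] [NormedSpace ℝ E] [MeasurableSpace E]
  {μ : Measure E} [NormedAddCommGroup F] [NormedSpace ℝ F] {W : E → F}

theorem HasCompactSupport.integrable_fderiv_apply [OpensMeasurableSpace E]
    [IsFiniteMeasureOnCompacts μ] (hW : ContDiff ℝ 1 W) (hWc : HasCompactSupport W) (v : E) :
    Integrable (fun x => fderiv ℝ W x v) μ :=
  ((hW.continuous_fderiv one_ne_zero).clm_apply continuous_const).integrable_of_hasCompactSupport
    ((hWc.fderiv ℝ).comp_left (g := fun L : E →L[ℝ] F => L v) rfl)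

theorem integral_fderiv_apply_eq_zero [FiniteDimensional ℝ E] [BorelSpace E]
    [μ.IsAddHaarMeasure] (hW : ContDiff ℝ 1 W) (hWc : HasCompactSupport W) (v : E) :
    ∫ x, fderiv ℝ W x v ∂μ = 0 := by
  simpa using integral_smul_fderiv_eq_neg_fderiv_smul_of_integrable (μ := μ)
    (f := fun _ => (1 : ℝ)) (g := W) (v := v) (by simp)
    (by simpa using hWc.integrable_fderiv_apply hW v)
    (by simpa using hW.continuous.integrable_of_hasCompactSupport hWc)
    (fun _ _ => differentiableAt_const _) (fun x _ => hW.differentiable one_ne_zero x)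

end IntegralFDeriv

theorem continuous_div3 {W : E3 → E3} (hW : ContDiff ℝ 1 W) : Continuous (div3 W) := by
  have := hW.continuous_fderiv one_ne_zero
  unfold div3
  fun_prop

theorem HasCompactSupport.div3 {W : E3 → E3} (hW : HasCompactSupport W) :
    HasCompactSupport (div3 W) :=
  (hW.fderiv ℝ).mono fun x hx hWx => hx (by simp [_root_.div3, hWx])

theorem integral_div3_eq_zero {W : E3 → E3} (hW : ContDiff ℝ 1 W) (hWc : HasCompactSupport W) :
    ∫ x, div3 W x = 0 := by
  have hint : ∀ i : Fin 3, Integrable fun x => fderiv ℝ W x (EuclideanSpace.single i 1) :=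
    fun i => hWc.integrable_fderiv_apply hW _
  unfold div3
  rw [integral_finsetSum _ fun i _ => (hint i).inner_const _]
  refine Finset.sum_eq_zero fun i _ => ?_
  simp_rw [real_inner_comm (EuclideanSpace.single i (1 : ℝ))]
  rw [integral_inner (hint i), integral_fderiv_apply_eq_zero hW hWc, inner_zero_right]

theorem integral_add_div3 {g : E3 → ℝ} {W : E3 → E3} (hg : Integrable g) (hW : ContDiff ℝ 1 W)
    (hWc : HasCompactSupport W) : ∫ x, (g x + div3 W x) = ∫ x, g x := by
  rw [integral_add hg ((continuous_div3 hW).integrable_of_hasCompactSupport hWc.div3),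
    integral_div3_eq_zero hW hWc, add_zero]

theorem div3_smul {a : E3 → ℝ} {V : E3 → E3} {x : E3} (ha : DifferentiableAt ℝ a x)
    (hV : DifferentiableAt ℝ V x) :
    div3 (fun y => a y • V y) x = fderiv ℝ a x (V x) + a x * div3 V x := by
  have hV_expand : V x = ∑ i, V x i • EuclideanSpace.single i (1 : ℝ) := by
    simpa using ((EuclideanSpace.basisFun (Fin 3) ℝ).sum_repr (V x)).symm
  conv_rhs => rw [hV_expand]
  simp only [div3, fderiv_fun_smul ha hV, map_sum, map_smul, Finset.mul_sum,
    ← Finset.sum_add_distrib]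
  refine Finset.sum_congr rfl fun i _ => ?_
  simp only [add_apply, smul_apply, ContinuousLinearMap.smulRight_apply, inner_add_left,
    EuclideanSpace.inner_single_right, PiLp.smul_apply, smul_eq_mul, Real.ringHom_apply, one_mul]
  ring

section MaterialDerivative

variable {E : Type*} [NormedAddCommGroup E] [NormedSpace ℝ E] {u : ℝ → E → E}
  {φ ψ : ℝ → E → ℝ} {t : ℝ} {x : E}

noncomputable def materialDeriv (u : ℝ → E → E) (φ : ℝ → E → ℝ) (t : ℝ) (x : E) : ℝ :=
  deriv (fun s => φ s x) t + fderiv ℝ (φ t) x (u t x)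

theorem materialDeriv_sub (hφ : DifferentiableAt ℝ (uncurry φ) (t, x))
    (hψ : DifferentiableAt ℝ (uncurry ψ) (t, x)) :
    materialDeriv u (fun s y => φ s y - ψ s y) t x
      = materialDeriv u φ t x - materialDeriv u ψ t x := by
  have hφt := (hasDerivAt_fst_of_differentiableAt_uncurry hφ).differentiableAt
  have hψt := (hasDerivAt_fst_of_differentiableAt_uncurry hψ).differentiableAt
  have hφx := differentiableAt_snd_of_differentiableAt_uncurry hφ
  have hψx := differentiableAt_snd_of_differentiableAt_uncurry hψ
  simp only [materialDeriv, deriv_fun_sub hφt hψt, fderiv_fun_sub hφx hψx, sub_apply]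
  ring

theorem materialDeriv_comp {G : ℝ → ℝ} (hG : DifferentiableAt ℝ G (φ t x))
    (hφ : DifferentiableAt ℝ (uncurry φ) (t, x)) :
    materialDeriv u (fun s y => G (φ s y)) t x = deriv G (φ t x) * materialDeriv u φ t x := by
  have hφt := (hasDerivAt_fst_of_differentiableAt_uncurry hφ).differentiableAt
  have hφx := differentiableAt_snd_of_differentiableAt_uncurry hφ
  have hGt : deriv (fun s => G (φ s x)) t = deriv G (φ t x) * deriv (fun s => φ s x) t :=
    (hG.hasDerivAt.comp t hφt.hasDerivAt).deriv
  have hGx : fderiv ℝ (fun y => G (φ t y)) x = deriv G (φ t x) • fderiv ℝ (φ t) x :=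
    (hG.hasDerivAt.comp_hasFDerivAt x hφx.hasFDerivAt).fderiv
  rw [materialDeriv, materialDeriv, hGt, hGx, smul_apply, smul_eq_mul]
  ring

end MaterialDerivative

theorem deriv_mul_add_div3_smul {ρ q : ℝ → E3 → ℝ} {u : ℝ → E3 → E3} {t : ℝ} {x : E3}
    (hρ : DifferentiableAt ℝ (uncurry ρ) (t, x)) (hq : DifferentiableAt ℝ (uncurry q) (t, x))
    (hu : DifferentiableAt ℝ (u t) x) :
    deriv (fun s => ρ s x * q s x) t + div3 (fun y => (ρ t y * q t y) • u t y) x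
      = q t x * (deriv (fun s => ρ s x) t + div3 (fun y => ρ t y • u t y) x)
        + ρ t x * materialDeriv u q t x := by
  have hρt := (hasDerivAt_fst_of_differentiableAt_uncurry hρ).differentiableAt
  have hqt := (hasDerivAt_fst_of_differentiableAt_uncurry hq).differentiableAt
  have hρx := differentiableAt_snd_of_differentiableAt_uncurry hρ
  have hqx := differentiableAt_snd_of_differentiableAt_uncurry hq
  have hflux : (fun y => (ρ t y * q t y) • u t y) = fun y => q t y • (ρ t y • u t y) := by
    ext1 y
    rw [smul_smul, mul_comm]
  rw [hflux, div3_smul (V := fun y => ρ t y • u t y) hqx (hρx.smul hu), deriv_fun_mul hρt hqt,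
    materialDeriv, map_smul, smul_eq_mul]
  ring

theorem modulated_energy_balance {ρ Θ T : ℝ → E3 → ℝ} {u v : ℝ → E3 → E3} {G : ℝ → ℝ}
    {t : ℝ} {x : E3} (hρ : DifferentiableAt ℝ (uncurry ρ) (t, x))
    (hΘ : DifferentiableAt ℝ (uncurry Θ) (t, x)) (hT : DifferentiableAt ℝ (uncurry T) (t, x))
    (hu : DifferentiableAt ℝ (u t) x) (hG : DifferentiableAt ℝ G (Θ t x))
    (hcont : deriv (fun s => ρ s x) t + div3 (fun y => ρ t y • u t y) x = 0)
    (htransΘ : deriv (fun s => Θ s x) t + ⟪u t x, gradient (Θ t) x⟫ = 0)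
    (htransT : deriv (fun s => T s x) t + ⟪v t x, gradient (T t) x⟫ = 0) :
    deriv (fun s => 1 / 2 * ρ s x * (G (Θ s x) - T s x) ^ 2) t
        + div3 (fun y => (1 / 2 * ρ t y * (G (Θ t y) - T t y) ^ 2) • u t y) x
      = ρ t x * (G (Θ t x) - T t x) * ⟪v t x - u t x, gradient (T t) x⟫ := by
  rw [real_inner_comm, inner_gradient_left] at htransΘ htransT ⊢
  set a : ℝ → E3 → ℝ := fun s y => G (Θ s y) - T s y
  have hGΘ : DifferentiableAt ℝ (uncurry fun s y => G (Θ s y)) (t, x) := hG.comp (t, x) hΘ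
  have ha : DifferentiableAt ℝ (uncurry a) (t, x) := hGΘ.sub hT
  have hq : DifferentiableAt ℝ (uncurry fun s y => 1 / 2 * a s y ^ 2) (t, x) :=
    (ha.pow 2).const_mul _
  have hmat_a : materialDeriv u a t x = fderiv ℝ (T t) x (v t x - u t x) := by
    rw [materialDeriv_sub hGΘ hT, materialDeriv_comp hG hΘ, materialDeriv,
      materialDeriv, map_sub]
    linear_combination deriv G (Θ t x) * htransΘ - htransT
  have hmat_q :
      materialDeriv u (fun s y => 1 / 2 * a s y ^ 2) t x = a t x * materialDeriv u a t x := by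
    rw [materialDeriv_comp (G := fun r => 1 / 2 * r ^ 2) (by fun_prop) ha]
    simp
  calc deriv (fun s => 1 / 2 * ρ s x * a s x ^ 2) t
          + div3 (fun y => (1 / 2 * ρ t y * a t y ^ 2) • u t y) x
      = deriv (fun s => ρ s x * (1 / 2 * a s x ^ 2)) t
          + div3 (fun y => (ρ t y * (1 / 2 * a t y ^ 2)) • u t y) x := by
        simp only [mul_left_comm (1 / 2 : ℝ), mul_assoc]
    _ = ρ t x * materialDeriv u (fun s y => 1 / 2 * a s y ^ 2) t x := by
        rw [deriv_mul_add_div3_smul hρ hq hu, hcont, mul_zero, zero_add]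
    _ = ρ t x * a t x * fderiv ℝ (T t) x (v t x - u t x) := by
        rw [hmat_q, hmat_a, mul_assoc]

theorem stability_lemma_integral_general
    (ρ Θ T : ℝ → E3 → ℝ) (u v : ℝ → E3 → E3) (G : ℝ → ℝ)
    (hρ : ContDiff ℝ 1 (fun p : ℝ × E3 => ρ p.1 p.2))
    (hΘ : ContDiff ℝ 1 (fun p : ℝ × E3 => Θ p.1 p.2))
    (hT : ContDiff ℝ 1 (fun p : ℝ × E3 => T p.1 p.2))
    (hu : ContDiff ℝ 1 (fun p : ℝ × E3 => u p.1 p.2))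
    (hG : ContDiff ℝ 1 G)
    (hsupp : ∃ K : Set E3, IsCompact K ∧ ∀ t, Function.support (ρ t) ⊆ K)
    (hcont : ∀ t x, deriv (fun s => ρ s x) t + div3 (fun y => ρ t y • u t y) x = 0)
    (htransΘ : ∀ t x, deriv (fun s => Θ s x) t + ⟪u t x, gradient (Θ t) x⟫ = 0)
    (htransT : ∀ t x, deriv (fun s => T s x) t + ⟪v t x, gradient (T t) x⟫ = 0) :
    ∀ τ₁ τ₂ : ℝ, τ₁ ≤ τ₂ →
      (∫ x : E3, (1 / 2) * ρ τ₂ x * (G (Θ τ₂ x) - T τ₂ x) ^ 2)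
          - ∫ x : E3, (1 / 2) * ρ τ₁ x * (G (Θ τ₁ x) - T τ₁ x) ^ 2
        = ∫ t in τ₁..τ₂, ∫ x : E3,
            ρ t x * (G (Θ t x) - T t x) * ⟪v t x - u t x, gradient (T t) x⟫ := by
  obtain ⟨K, hK, hρK⟩ := hsupp
  intro τ₁ τ₂ _
  set e : ℝ → E3 → ℝ := fun t x => 1 / 2 * ρ t x * (G (Θ t x) - T t x) ^ 2
  have he : ContDiff ℝ 1 (uncurry e) := (contDiff_const.mul hρ).mul (((hG.comp hΘ).sub hT).pow 2)
  have heK : ∀ t, support (e t) ⊆ K := fun t x hx =>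
    hρK t (right_ne_zero_of_mul (left_ne_zero_of_mul hx))
  refine (integral_sub_integral_eq_intervalIntegral_deriv he hK heK τ₁ τ₂).trans
    (intervalIntegral.integral_congr fun t _ => ?_)
  have hflux : ContDiff ℝ 1 fun y => e t y • u t y :=
    (contDiff_snd_of_contDiff_uncurry he t).smul (contDiff_snd_of_contDiff_uncurry hu t)
  have hfluxK : HasCompactSupport fun y => e t y • u t y :=
    hasCompactSupport_of_support_subset hK fun x hx => heK t (left_ne_zero_of_smul hx)
  rw [← integral_add_div3 (integrable_deriv_fst_of_support_subset he hK heK t) hflux hfluxK]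
  refine integral_congr_ae (.of_forall fun x => ?_)
  exact modulated_energy_balance (hρ.differentiable one_ne_zero _) (hΘ.differentiable one_ne_zero _)
    (hT.differentiable one_ne_zero _)
    (differentiableAt_snd_of_differentiableAt_uncurry (hu.differentiable one_ne_zero _))
    (hG.differentiable one_ne_zero _) (hcont t x) (htransΘ t x) (htransT t x)

/-- Integral form of the stability lemma for classical solutions: if the compactly
supported density `ρ` satisfies the continuity equation with velocity `u`, `Θ` is
transported by `u`, `𝒯` is transported by `v`, and `G` is a `C¹` renormalization, then
`[∫ ½ρ|G(Θ)−𝒯|² dx]_{τ₁}^{τ₂} = ∫_{τ₁}^{τ₂} ∫ ρ(G(Θ)−𝒯)(v−u)·∇𝒯 dx dt`. -/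
theorem stability_lemma_integral
    (ρ Θ T : ℝ → E3 → ℝ) (u v : ℝ → E3 → E3) (G : ℝ → ℝ)
    (hρ : ContDiff ℝ 1 (fun p : ℝ × E3 => ρ p.1 p.2))
    (hΘ : ContDiff ℝ 1 (fun p : ℝ × E3 => Θ p.1 p.2))
    (hT : ContDiff ℝ 1 (fun p : ℝ × E3 => T p.1 p.2))
    (hu : ContDiff ℝ 1 (fun p : ℝ × E3 => u p.1 p.2))
    (hv : ContDiff ℝ 1 (fun p : ℝ × E3 => v p.1 p.2))
    (hG : ContDiff ℝ 1 G)
    (hsupp : ∃ K : Set E3, IsCompact K ∧ ∀ t, Function.support (ρ t) ⊆ K)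
    (hcont : ∀ t x, deriv (fun s => ρ s x) t + div3 (fun y => ρ t y • u t y) x = 0)
    (htransΘ : ∀ t x, deriv (fun s => Θ s x) t + ⟪u t x, gradient (Θ t) x⟫ = 0)
    (htransT : ∀ t x, deriv (fun s => T s x) t + ⟪v t x, gradient (T t) x⟫ = 0) :
    ∀ τ₁ τ₂ : ℝ, τ₁ ≤ τ₂ →
      (∫ x : E3, (1 / 2) * ρ τ₂ x * (G (Θ τ₂ x) - T τ₂ x) ^ 2)
          - ∫ x : E3, (1 / 2) * ρ τ₁ x * (G (Θ τ₁ x) - T τ₁ x) ^ 2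
        = ∫ t in τ₁..τ₂, ∫ x : E3,
            ρ t x * (G (Θ t x) - T t x) * ⟪v t x - u t x, gradient (T t) x⟫ :=
  stability_lemma_integral_general ρ Θ T u v G hρ hΘ hT hu hG hsupp hcont htransΘ htransT
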